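/- arXiv:2011.05419 — 3 statements merged into one kernel-verified Lean document; each statement's English description precedes it below -/
import Mathlib

section
/- Let F be a real m × n matrix and let K₁, …, Kₙ be nonnegative reals. Define f_f : ℝᵐ → ℝᵐ by f_f(q) = F · v(Fᵀ q), where v : ℝⁿ → ℝⁿ is given componentwise by v(x)ᵢ = Kᵢ·|xᵢ|·xᵢ. Then f_f is monotone with respect to q: (u − w)ᵀ(f_f(u) − f_f(w)) ≥ 0 for all u, w ∈ ℝᵐ. -/
open Matrix

lemma scalar_mono (k a b : ℝ) (hk : 0 ≤ k) :
    0 ≤ (a - b) * (k * |a| * a - k * |b| * b) := by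
  have h : 0 ≤ (a - b) * (|a| * a - |b| * b) := by
    rcases le_or_gt 0 a with ha | ha <;> rcases le_or_gt 0 b with hb | hb
    · rw [abs_of_nonneg ha, abs_of_nonneg hb]
      nlinarith [sq_nonneg (a - b), sq_nonneg (a + b), mul_nonneg ha hb]
    · rw [abs_of_nonneg ha, abs_of_neg hb]
      nlinarith [sq_nonneg (a - b), sq_nonneg (a + b), mul_self_nonneg a, mul_self_nonneg b]
    · rw [abs_of_neg ha, abs_of_nonneg hb]
      nlinarith [sq_nonneg (a - b), sq_nonneg (a + b), mul_self_nonneg a, mul_self_nonneg b]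
    · rw [abs_of_neg ha, abs_of_neg hb]
      nlinarith [sq_nonneg (a - b), sq_nonneg (a + b), mul_nonneg (neg_nonneg.2 ha.le) (neg_nonneg.2 hb.le)]
  calc (0:ℝ) ≤ k * ((a - b) * (|a| * a - |b| * b)) := mul_nonneg hk h
    _ = (a - b) * (k * |a| * a - k * |b| * b) := by ring

/-- Lemma 4 of the paper: the friction map of the reduced flow dynamics
`f_f(q) = F ⬝ v(Fᵀ q)`, with `v(x)ᵢ = Kᵢ * |xᵢ| * xᵢ` and `Kᵢ ≥ 0`, is
monotone: `(u − w)ᵀ (f_f u − f_f w) ≥ 0` for all `u w : ℝᵐ`. -/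
theorem friction_map_monotone (m n : ℕ) (F : Matrix (Fin m) (Fin n) ℝ)
    (K : Fin n → ℝ) (hK : ∀ i, 0 ≤ K i) :
    ∀ u w : Fin m → ℝ,
      0 ≤ (u - w) ⬝ᵥ
        (F.mulVec (fun i => K i * |F.transpose.mulVec u i| * F.transpose.mulVec u i) -
         F.mulVec (fun i => K i * |F.transpose.mulVec w i| * F.transpose.mulVec w i)) := by
  intro u w
  rw [← mulVec_sub, dotProduct_mulVec, ← mulVec_transpose]
  apply Finset.sum_nonneg
  intro i _
  simp only [mulVec_sub, Pi.sub_apply]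
  exact scalar_mono (K i) _ _ (hK i)
end

section
/- Let J be a real symmetric positive definite n × n matrix, let f : ℝⁿ → ℝⁿ be monotone (i.e. (u − v)ᵀ(f(u) − f(v)) ≥ 0 for all u, v), and let c ∈ ℝⁿ be a constant vector. Let q̄, w̄ ∈ ℝⁿ be an equilibrium pair, i.e. 0 = −f(q̄) + w̄ + c. Suppose q : ℝ → ℝⁿ is differentiable and w : ℝ → ℝⁿ satisfies J·q′(t) = −f(q(t)) + w(t) + c for all t. Then the storage function H(t) = ½·(q(t) − q̄)ᵀ·J·(q(t) − q̄) is differentiable and satisfies H′(t) ≤ (q(t) − q̄)ᵀ·(w(t) − w̄) for all t, i.e. the flow dynamics are shifted passive with passive output q − q̄. -/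
/-! Since `J` is symmetric, the shifted kinetic energy has derivative `(q - q̄)ᵀ J q̇ =
(q - q̄)ᵀ (-f q + w + c)`. Subtracting the equilibrium relation turns this into
`(q - q̄)ᵀ (w - w̄) - (q - q̄)ᵀ (f q - f q̄)`, and the last term is nonnegative because `f` is
monotone. -/

open Matrix

section Calculus

variable {𝕜 : Type*} [NontriviallyNormedField 𝕜] {ι : Type*} [Fintype ι]
  {u v : 𝕜 → ι → 𝕜} {u' v' : ι → 𝕜} {t : 𝕜}

theorem HasDerivAt.dotProduct (hu : HasDerivAt u u' t) (hv : HasDerivAt v v' t) :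
    HasDerivAt (fun s => u s ⬝ᵥ v s) (u' ⬝ᵥ v t + u t ⬝ᵥ v') t := by
  simp only [_root_.dotProduct, ← Finset.sum_add_distrib]
  exact HasDerivAt.fun_sum fun i _ => (hasDerivAt_pi.1 hu i).mul (hasDerivAt_pi.1 hv i)

theorem HasDerivAt.matrix_mulVec (A : Matrix ι ι 𝕜) (hv : HasDerivAt v v' t) :
    HasDerivAt (fun s => A *ᵥ v s) (A *ᵥ v') t :=
  hasDerivAt_pi.2 fun i => by
    simpa [mulVec] using (hasDerivAt_const t (A i)).dotProduct hv

end Calculus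

theorem Matrix.IsSymm.hasDerivAt_half_dotProduct_mulVec {ι : Type*} [Fintype ι]
    {J : Matrix ι ι ℝ} (hJ : J.IsSymm) {x : ℝ → ι → ℝ} {x' : ι → ℝ} {t : ℝ}
    (hx : HasDerivAt x x' t) :
    HasDerivAt (fun s => (1 / 2 : ℝ) * (x s ⬝ᵥ J *ᵥ x s)) (x t ⬝ᵥ J *ᵥ x') t := by
  have hswap : x' ⬝ᵥ J *ᵥ x t = x t ⬝ᵥ J *ᵥ x' := by
    rw [dotProduct_mulVec, ← vecMul_transpose, hJ.eq, dotProduct_comm]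
  refine ((hx.dotProduct (hx.matrix_mulVec J)).const_mul (1 / 2 : ℝ)).congr_deriv ?_
  rw [hswap]
  ring

theorem sub_dotProduct_le_of_monotone {ι : Type*} [Fintype ι]
    {f : (ι → ℝ) → ι → ℝ} (hf : ∀ u v, 0 ≤ (u - v) ⬝ᵥ (f u - f v))
    {c ubar wbar : ι → ℝ} (heq : (0 : ι → ℝ) = -f ubar + wbar + c) (u w : ι → ℝ) :
    (u - ubar) ⬝ᵥ (-f u + w + c) ≤ (u - ubar) ⬝ᵥ (w - wbar) := by
  have hsplit : -f u + w + c = (w - wbar) - (f u - f ubar) := by linear_combination -heq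
  rw [hsplit, dotProduct_sub]
  linarith [hf u ubar]

/-- Theorem 3 of the paper (shifted passivity of the flow dynamics): if `J` is
symmetric positive definite, `f` is monotone, `(q̄, w̄)` is an equilibrium pair
of `J q̇ = −f(q) + w + c`, and `q` solves the dynamics with input `w`, then the
shifted kinetic energy `H(t) = ½ (q t − q̄)ᵀ J (q t − q̄)` is differentiable and
satisfies `H′(t) ≤ (q t − q̄)ᵀ (w t − w̄)`. -/
theorem flow_dynamics_shifted_passive (n : ℕ) (J : Matrix (Fin n) (Fin n) ℝ)
    (hJ : J.PosDef)
    (f : (Fin n → ℝ) → (Fin n → ℝ))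
    (hf : ∀ u v : Fin n → ℝ, 0 ≤ (u - v) ⬝ᵥ (f u - f v))
    (c qbar wbar : Fin n → ℝ)
    (heq : (0 : Fin n → ℝ) = -f qbar + wbar + c)
    (q q' : ℝ → Fin n → ℝ) (w : ℝ → Fin n → ℝ)
    (hq : ∀ t, HasDerivAt q (q' t) t)
    (hdyn : ∀ t, J.mulVec (q' t) = -f (q t) + w t + c) :
    ∀ t : ℝ,
      DifferentiableAt ℝ
        (fun s => (1 / 2 : ℝ) * ((q s - qbar) ⬝ᵥ J.mulVec (q s - qbar))) t ∧
      deriv (fun s => (1 / 2 : ℝ) * ((q s - qbar) ⬝ᵥ J.mulVec (q s - qbar))) t ≤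
        (q t - qbar) ⬝ᵥ (w t - wbar) := by
  intro t
  have hJsymm : J.IsSymm := isHermitian_iff_isSymm.1 hJ.isHermitian
  have hH := hJsymm.hasDerivAt_half_dotProduct_mulVec ((hq t).sub_const qbar)
  refine ⟨hH.differentiableAt, ?_⟩
  rw [hH.deriv, hdyn t]
  exact sub_dotProduct_le_of_monotone hf heq (q t) (w t)
end

section
/- Let 𝒮 and 𝒯 be real N × E matrices with all entries nonnegative, satisfying 𝒮ᵀ·𝟏_N = 𝟏_E and 𝟏_Nᵀ·𝒯 = 𝟏_Eᵀ, and let a ∈ ℝ^E have all entries strictly positive and satisfy (𝒯 − 𝒮)·a = 0. Then the (E + N) × (E + N) block matrix 𝒜 = [[−diag(a), diag(a)·𝒮ᵀ], [𝒯·diag(a), −diag(𝒯·a)]] is negative semidefinite in the quadratic-form sense: xᵀ·𝒜·x ≤ 0 for all x ∈ ℝ^{E+N}. -/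
open Matrix

/-- Lemma 5 of the paper: with `𝒮, 𝒯` entrywise nonnegative, `𝒮ᵀ 𝟏 = 𝟏`,
`𝟏ᵀ 𝒯 = 𝟏ᵀ`, `a` entrywise positive and `(𝒯 − 𝒮) a = 0`, the coefficient
matrix `𝒜 = [[−diag a, diag a ⬝ 𝒮ᵀ], [𝒯 diag a, −diag(𝒯 a)]]` of the
temperature dynamics is negative semidefinite: `xᵀ 𝒜 x ≤ 0` for all `x`. -/
theorem thermal_coefficient_matrix_neg_semidef (N E : ℕ)
    (S T : Matrix (Fin N) (Fin E) ℝ) (a : Fin E → ℝ)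
    (hSpos : ∀ i j, 0 ≤ S i j) (hTpos : ∀ i j, 0 ≤ T i j)
    (hS : S.transpose.mulVec (fun _ => (1 : ℝ)) = fun _ => 1)
    (hT : Matrix.vecMul (fun _ => (1 : ℝ)) T = fun _ => 1)
    (ha : ∀ i, 0 < a i)
    (hbal : (T - S).mulVec a = 0) :
    ∀ x : Fin E ⊕ Fin N → ℝ,
      x ⬝ᵥ (Matrix.fromBlocks (-(Matrix.diagonal a)) (Matrix.diagonal a * S.transpose)
        (T * Matrix.diagonal a) (-(Matrix.diagonal (T.mulVec a)))).mulVec x ≤ 0 := by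
  intro x
  have hS' : ∀ e, ∑ n, S n e = 1 := by
    intro e
    have := congrFun hS e
    simpa [Matrix.mulVec, dotProduct] using this
  have hT' : ∀ e, ∑ n, T n e = 1 := by
    intro e
    have := congrFun hT e
    simpa [Matrix.vecMul, dotProduct] using this
  have hbal' : ∀ n, ∑ e, T n e * a e = ∑ e, S n e * a e := by
    intro n
    have := congrFun hbal n
    simp [Matrix.mulVec, dotProduct, Matrix.sub_apply, sub_mul,
      Finset.sum_sub_distrib, sub_eq_zero] at this
    exact this
  set u : Fin E → ℝ := fun e => x (Sum.inl e) with hu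
  set v : Fin N → ℝ := fun n => x (Sum.inr n) with hv
  simp only [dotProduct, mulVec, Fintype.sum_sum_type, Matrix.fromBlocks_apply₁₁,
    Matrix.fromBlocks_apply₁₂, Matrix.fromBlocks_apply₂₁, Matrix.fromBlocks_apply₂₂,
    Matrix.neg_apply, Matrix.diagonal_mul, Matrix.mul_diagonal, Matrix.transpose_apply,
    Matrix.diagonal_apply, ite_mul, neg_mul, zero_mul, Finset.sum_ite_eq,
    Finset.mem_univ, if_true, Finset.sum_neg_distrib, ← hu, ← hv]
  -- name the atomic sums
  set A : ℝ := ∑ e, a e * u e ^ 2 with hA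
  set B : ℝ := ∑ n, ∑ e, a e * S n e * u e * v n with hB
  set C : ℝ := ∑ n, ∑ e, T n e * a e * u e * v n with hC
  set D : ℝ := ∑ n, ∑ e, T n e * a e * v n ^ 2 with hD
  have h1 : ∑ e, u e * (-(a e * u e) + ∑ n, a e * S n e * v n) = -A + B := by
    rw [hA, hB, Finset.sum_comm (s := Finset.univ) (t := Finset.univ),
      ← Finset.sum_neg_distrib, ← Finset.sum_add_distrib]
    refine Finset.sum_congr rfl fun e _ => ?_
    rw [mul_add, Finset.mul_sum]
    congr 1
    · ring
    · exact Finset.sum_congr rfl fun n _ => by ring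
  have h2 : ∑ n, v n * ((∑ e, T n e * a e * u e) + -((∑ e, T n e * a e) * v n))
      = C - D := by
    rw [hC, hD, ← Finset.sum_sub_distrib]
    refine Finset.sum_congr rfl fun n _ => ?_
    rw [mul_add, mul_neg, Finset.sum_mul, Finset.mul_sum, Finset.mul_sum,
      ← Finset.sum_neg_distrib, ← Finset.sum_add_distrib, ← Finset.sum_sub_distrib]
    exact Finset.sum_congr rfl fun e _ => by ring
  have hP : ∑ n, ∑ e, a e * S n e * u e ^ 2 = A := by
    rw [Finset.sum_comm, hA]
    refine Finset.sum_congr rfl fun e _ => ?_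
    have h : ∑ n, a e * S n e * u e ^ 2 = (∑ n, S n e) * (a e * u e ^ 2) := by
      rw [Finset.sum_mul]
      exact Finset.sum_congr rfl fun n _ => by ring
    rw [h, hS' e, one_mul]
  have hQ : ∑ n, ∑ e, a e * T n e * u e ^ 2 = A := by
    rw [Finset.sum_comm, hA]
    refine Finset.sum_congr rfl fun e _ => ?_
    have h : ∑ n, a e * T n e * u e ^ 2 = (∑ n, T n e) * (a e * u e ^ 2) := by
      rw [Finset.sum_mul]
      exact Finset.sum_congr rfl fun n _ => by ring
    rw [h, hT' e, one_mul]
  have hDs : ∑ n, ∑ e, a e * S n e * v n ^ 2 = D := by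
    rw [hD]
    refine Finset.sum_congr rfl fun n _ => ?_
    have h3 : ∑ e, a e * S n e * v n ^ 2 = (∑ e, S n e * a e) * v n ^ 2 := by
      rw [Finset.sum_mul]; exact Finset.sum_congr rfl fun e _ => by ring
    have h4 : ∑ e, T n e * a e * v n ^ 2 = (∑ e, T n e * a e) * v n ^ 2 := by
      rw [Finset.sum_mul]
    rw [h3, h4, hbal' n]
  have hRpos : (0:ℝ) ≤ ∑ n, ∑ e, a e * (S n e + T n e) * (u e - v n) ^ 2 := by
    refine Finset.sum_nonneg fun n _ => Finset.sum_nonneg fun e _ => ?_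
    exact mul_nonneg (mul_nonneg (ha e).le (add_nonneg (hSpos n e) (hTpos n e)))
      (sq_nonneg _)
  have hexp : ∑ n, ∑ e, a e * (S n e + T n e) * (u e - v n) ^ 2
      = (∑ n, ∑ e, a e * S n e * u e ^ 2) + (∑ n, ∑ e, a e * T n e * u e ^ 2)
        - 2 * B - 2 * C + (∑ n, ∑ e, a e * S n e * v n ^ 2) + D := by
    rw [hB, hC, hD, Finset.mul_sum, Finset.mul_sum,
      ← Finset.sum_add_distrib, ← Finset.sum_sub_distrib, ← Finset.sum_sub_distrib,
      ← Finset.sum_add_distrib, ← Finset.sum_add_distrib]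
    refine Finset.sum_congr rfl fun n _ => ?_
    rw [Finset.mul_sum, Finset.mul_sum,
      ← Finset.sum_add_distrib, ← Finset.sum_sub_distrib, ← Finset.sum_sub_distrib,
      ← Finset.sum_add_distrib, ← Finset.sum_add_distrib]
    exact Finset.sum_congr rfl fun e _ => by ring
  rw [h1, h2]
  rw [hexp, hP, hQ, hDs] at hRpos
  linarith
end
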